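/- Let X be a finite (q+1)-regular graph on n vertices with normalized adjacency eigenvalues having p-values p₀,…,p_{n−1} (where p_i = 2 if |λ_i| ≤ 2√q/(q+1), and otherwise |λ_i| = (q^{1/p_i} + q^{1−1/p_i})/(q+1) with 2 < p_i ≤ ∞). Fix 0 < A ≤ 1. Then the condition 'for every p > 2 and ε > 0, #{i : p_i ≥ p} ≪_ε n^{1−A(1−2/p)+ε}' is equivalent to the condition 'for every ε > 0, ∑_i n^{−1+A(1−2/p_i)} ≪_ε n^ε'. -/

import Mathlib

/-!
By Gershgorin, the eigenvalues of a `(q+1)`-regular graph satisfy `|λ_i| ≤ 1`, so every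
`1/p_i` lies in `[0, 1/2]`. The sum dominates `#{i : p_i ≥ p} · n^{-1+A(1-2/p)}` (Markov), which
gives one direction. Conversely, cut `[0, 1/2]` into `N` intervals of length `1/(2N)`: each
interval contributes at most `n^{A/N} · #{i : p_i ≥ p_j} · n^{-1+A(1-2/p_j)} ≪ n^{A/N + ε/2}`,
and `A/N ≤ ε/2` once `N` is large.
-/

open scoped Classical

/-- The reciprocal `1/p` of the `p`-value of a normalized adjacency eigenvalue `lam` of a
`(q+1)`-regular graph: it is `1/2` if `|lam| ≤ 2√q/(q+1)`, and otherwise `1/p ∈ [0,1/2)`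
is determined by `|lam| = (q^{1/p} + q^{1-1/p})/(q+1)`, i.e. `q^{1-1/p} = θ` is the larger
root `((q+1)|lam| + √((q+1)²lam² − 4q))/2`. -/
noncomputable def pexp (q : ℕ) (lam : ℝ) : ℝ :=
  if |lam| ≤ 2 * Real.sqrt q / ((q : ℝ) + 1) then 1 / 2
  else 1 - Real.logb q
    ((((q : ℝ) + 1) * |lam| + Real.sqrt (((q : ℝ) + 1) ^ 2 * lam ^ 2 - 4 * q)) / 2)

open Finset

theorem SimpleGraph.IsRegularOfDegree.abs_le_of_isRoot_charpoly {V : Type*} [Fintype V]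
    [DecidableEq V] {G : SimpleGraph V} [DecidableRel G.Adj] {d : ℕ}
    (hreg : G.IsRegularOfDegree d) {μ : ℝ} (hμ : (G.adjMatrix ℝ).charpoly.IsRoot μ) :
    |μ| ≤ d := by
  rw [← Matrix.charpoly_toLin', ← Module.End.hasEigenvalue_iff_isRoot_charpoly] at hμ
  obtain ⟨k, hk⟩ := eigenvalue_mem_ball hμ
  have hrow : ∑ j ∈ univ.erase k, ‖G.adjMatrix ℝ k j‖ = d := by
    rw [sum_erase _ (by simp), ← hreg k, SimpleGraph.degree,
      SimpleGraph.neighborFinset_eq_filter]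
    simp [SimpleGraph.adjMatrix_apply, apply_ite, sum_boole]
  rw [Metric.mem_closedBall, hrow] at hk
  simpa using hk

theorem SimpleGraph.IsRegularOfDegree.abs_le_one_of_charpoly_eq_prod {V ι : Type*}
    [Fintype V] [DecidableEq V] [Fintype ι] {G : SimpleGraph V} [DecidableRel G.Adj] {d : ℕ}
    (hd : 0 < d) (hreg : G.IsRegularOfDegree d) {lam : ι → ℝ}
    (hev : (G.adjMatrix ℝ).charpoly = ∏ i, (Polynomial.X - Polynomial.C ((d : ℝ) * lam i)))
    (i : ι) : |lam i| ≤ 1 := by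
  have hroot : (G.adjMatrix ℝ).charpoly.IsRoot (d * lam i) := by
    rw [hev, Polynomial.isRoot_prod]
    exact ⟨i, mem_univ i, by simp⟩
  have hd' : (0 : ℝ) < d := by exact_mod_cast hd
  have := hreg.abs_le_of_isRoot_charpoly hroot
  rw [abs_mul, Nat.abs_cast] at this
  exact (mul_le_iff_le_one_right hd').mp this

theorem pexp_le_half {q : ℕ} (hq : 1 < q) (lam : ℝ) : pexp q lam ≤ 1 / 2 := by
  have hq' : (1 : ℝ) < q := by exact_mod_cast hq
  unfold pexp
  split_ifs with h
  · exact le_rfl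
  rw [not_le, div_lt_iff₀' (by positivity)] at h
  set θ := (((q : ℝ) + 1) * |lam| + √(((q : ℝ) + 1) ^ 2 * lam ^ 2 - 4 * q)) / 2 with hθ_def
  have hθ : √q ≤ θ := by
    linarith [hθ_def, Real.sqrt_nonneg (((q : ℝ) + 1) ^ 2 * lam ^ 2 - 4 * q)]
  have hhalf : Real.logb q √q = 1 / 2 := by
    rw [Real.sqrt_eq_rpow, Real.logb_rpow (by positivity) hq'.ne']
  have := Real.logb_le_logb_of_le hq' (by positivity) hθ
  linarith

theorem pexp_nonneg {q : ℕ} (hq : 1 < q) {lam : ℝ} (hlam : |lam| ≤ 1) : 0 ≤ pexp q lam := by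
  have hq' : (1 : ℝ) < q := by exact_mod_cast hq
  unfold pexp
  split_ifs with h
  · norm_num
  rw [not_le, div_lt_iff₀' (by positivity)] at h
  set θ := (((q : ℝ) + 1) * |lam| + √(((q : ℝ) + 1) ^ 2 * lam ^ 2 - 4 * q)) / 2 with hθ_def
  have hdisc : √(((q : ℝ) + 1) ^ 2 * lam ^ 2 - 4 * q) ≤ q - 1 := by
    rw [Real.sqrt_le_iff]
    refine ⟨by linarith, ?_⟩
    have : lam ^ 2 ≤ 1 := by rw [← sq_abs]; nlinarith [abs_nonneg lam]
    nlinarith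
  have hθq : θ ≤ q := by nlinarith [hθ_def]
  have hθ : 0 < θ := by
    linarith [hθ_def, Real.sqrt_nonneg (q : ℝ),
      Real.sqrt_nonneg (((q : ℝ) + 1) ^ 2 * lam ^ 2 - 4 * q)]
  have := Real.logb_le_logb_of_le hq' hθ hθq
  rw [Real.logb_self_eq_one hq'] at this
  linarith

theorem exists_nat_lt_mem_Icc {N : ℕ} (hN : 0 < N) {y : ℝ} (hy : y ∈ Set.Icc 0 (N : ℝ)) :
    ∃ j < N, y ∈ Set.Icc (j : ℝ) (j + 1) := by
  obtain ⟨hy0, hyN⟩ := hy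
  by_cases hfl : ⌊y⌋₊ < N
  · exact ⟨⌊y⌋₊, hfl, Nat.floor_le hy0, (Nat.lt_floor_add_one y).le⟩
  · refine ⟨N - 1, Nat.sub_lt hN one_pos, ?_, ?_⟩
    · have : (N : ℝ) ≤ ⌊y⌋₊ := by exact_mod_cast not_lt.mp hfl
      rw [Nat.cast_pred hN]
      linarith [Nat.floor_le hy0]
    · rw [Nat.cast_pred hN]
      linarith

/-- The levels `t_j = 1/p_j` with `p_j = 2N/(N - j)`, at which the density bound is sampled. -/
noncomputable def level (N : ℕ) (j : Fin N) : ℝ := (1 - (j : ℝ) / N) / 2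

theorem level_mem_Ioc {N : ℕ} (j : Fin N) : level N j ∈ Set.Ioc 0 (1 / 2) := by
  have hN : (0 : ℝ) < N := by exact_mod_cast j.pos
  have hj : (j : ℝ) < N := by exact_mod_cast j.isLt
  have : (j : ℝ) / N < 1 := (div_lt_one hN).mpr hj
  have : 0 ≤ (j : ℝ) / N := by positivity
  constructor <;> simp only [level] <;> linarith

section

variable {ι : Type*} [Fintype ι] {n A : ℝ} {s : ι → ℝ}

theorem card_filter_mul_rpow_le_sum (hn : 1 ≤ n) (hA : 0 ≤ A) (t : ℝ) :
    (#{i | s i ≤ t} : ℝ) * n ^ (-1 + A * (1 - 2 * t)) ≤ ∑ i, n ^ (-1 + A * (1 - 2 * s i)) :=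
  calc (#{i | s i ≤ t} : ℝ) * n ^ (-1 + A * (1 - 2 * t))
      = ∑ i with s i ≤ t, n ^ (-1 + A * (1 - 2 * t)) := by rw [sum_const, nsmul_eq_mul]
    _ ≤ ∑ i with s i ≤ t, n ^ (-1 + A * (1 - 2 * s i)) := by
        refine sum_le_sum fun i hi => Real.rpow_le_rpow_of_exponent_le hn ?_
        have := (mem_filter.mp hi).2
        nlinarith
    _ ≤ ∑ i, n ^ (-1 + A * (1 - 2 * s i)) :=
        sum_le_sum_of_subset_of_nonneg (filter_subset _ _)
          fun i _ _ => Real.rpow_nonneg (by linarith) _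

theorem sum_rpow_le_rpow_mul_sum_card_mul (hn : 1 ≤ n) (hA : 0 ≤ A)
    (hs : ∀ i, s i ∈ Set.Icc 0 (1 / 2)) {N : ℕ} (hN : 0 < N) :
    ∑ i, n ^ (-1 + A * (1 - 2 * s i)) ≤
      n ^ (A / N) * ∑ j, (#{i | s i ≤ level N j} : ℝ) * n ^ (-1 + A * (1 - 2 * level N j)) := by
  have hn0 : 0 < n := by linarith
  have hN' : (0 : ℝ) < N := by exact_mod_cast hN
  have hbucket : ∀ i, ∃ j, s i ≤ level N j ∧
      -1 + A * (1 - 2 * s i) ≤ A / N + (-1 + A * (1 - 2 * level N j)) := by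
    intro i
    obtain ⟨hs0, hs1⟩ := hs i
    obtain ⟨j, hjN, hjl, hju⟩ := exists_nat_lt_mem_Icc hN
      (y := N * (1 - 2 * s i)) ⟨by nlinarith, by nlinarith⟩
    have hlev : 1 - 2 * level N ⟨j, hjN⟩ = j / N := by simp only [level]; ring
    refine ⟨⟨j, hjN⟩, ?_, ?_⟩
    · have : (j : ℝ) / N ≤ 1 - 2 * s i := by rw [div_le_iff₀ hN']; linarith
      linarith
    · have : 1 - 2 * s i ≤ 1 / N + j / N := by
        rw [← add_div, le_div_iff₀ hN']; linarith
      rw [hlev, div_eq_mul_one_div A]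
      nlinarith
  calc ∑ i, n ^ (-1 + A * (1 - 2 * s i))
      ≤ ∑ i, ∑ j with s i ≤ level N j, n ^ (A / N) * n ^ (-1 + A * (1 - 2 * level N j)) := by
        refine sum_le_sum fun i _ => ?_
        obtain ⟨j, hj, hexp⟩ := hbucket i
        calc n ^ (-1 + A * (1 - 2 * s i))
            ≤ n ^ (A / N) * n ^ (-1 + A * (1 - 2 * level N j)) := by
              rw [← Real.rpow_add hn0]; exact Real.rpow_le_rpow_of_exponent_le hn hexp
          _ ≤ _ := single_le_sum
              (f := fun j => n ^ (A / N) * n ^ (-1 + A * (1 - 2 * level N j)))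
              (fun j _ => by positivity) (by simpa using hj)
    _ = ∑ j, ∑ i with s i ≤ level N j, n ^ (A / N) * n ^ (-1 + A * (1 - 2 * level N j)) :=
        sum_comm' (by simp)
    _ = _ := by
        simp only [sum_const, nsmul_eq_mul, mul_sum]
        exact sum_congr rfl fun j _ => by ring

end

section

variable {α : Type*} {ι : α → Type*} [∀ m, Fintype (ι m)]

/-- `s m i` stands for `1/p_i`, so the filter counts `#{i : p_i ≥ p}`. -/
def DensityBound (A : ℝ) (n : α → ℝ) (s : ∀ m, ι m → ℝ) : Prop :=
  ∀ p : ℝ, 2 < p → ∀ ε : ℝ, 0 < ε → ∃ C : ℝ, 0 < C ∧ ∀ m,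
    (#{i | s m i ≤ 1 / p} : ℝ) ≤ C * n m ^ (1 - A * (1 - 2 / p) + ε)

def SumBound (A : ℝ) (n : α → ℝ) (s : ∀ m, ι m → ℝ) : Prop :=
  ∀ ε : ℝ, 0 < ε → ∃ C : ℝ, 0 < C ∧ ∀ m, ∑ i, n m ^ (-1 + A * (1 - 2 * s m i)) ≤ C * n m ^ ε

variable {A : ℝ} {n : α → ℝ} {s : ∀ m, ι m → ℝ}

theorem SumBound.densityBound (hA : 0 ≤ A) (hn : ∀ m, 1 ≤ n m) (h : SumBound A n s) :
    DensityBound A n s := by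
  intro p hp ε hε
  obtain ⟨C, hC, hbound⟩ := h ε hε
  refine ⟨C, hC, fun m => ?_⟩
  have hn0 : 0 < n m := by linarith [hn m]
  have hexp : (-1 + A * (1 - 2 * (1 / p))) = -(1 - A * (1 - 2 / p)) := by ring
  have hmarkov := (card_filter_mul_rpow_le_sum (hn m) hA (1 / p) (s := s m)).trans (hbound m)
  rw [hexp, Real.rpow_neg hn0.le, ← div_eq_mul_inv, div_le_iff₀ (by positivity)] at hmarkov
  rwa [mul_assoc, ← Real.rpow_add hn0, add_comm ε] at hmarkov

theorem DensityBound.exists_card_mul_le (hn : ∀ m, 1 ≤ n m)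
    (hcard : ∀ m, (Fintype.card (ι m) : ℝ) ≤ n m) (h : DensityBound A n s)
    {t : ℝ} (ht : t ∈ Set.Ioc 0 (1 / 2)) {ε : ℝ} (hε : 0 < ε) :
    ∃ C : ℝ, 0 < C ∧ ∀ m,
      (#{i | s m i ≤ t} : ℝ) * n m ^ (-1 + A * (1 - 2 * t)) ≤ C * n m ^ ε := by
  obtain ⟨ht0, ht1⟩ := ht
  rcases ht1.lt_or_eq with ht1 | rfl
  · have hp : 2 < 1 / t := by rw [lt_one_div (by norm_num) ht0]; linarith
    obtain ⟨C, hC, hbound⟩ := h (1 / t) hp ε hε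
    refine ⟨C, hC, fun m => ?_⟩
    have hn0 : 0 < n m := by linarith [hn m]
    have := mul_le_mul_of_nonneg_right (hbound m)
      (Real.rpow_nonneg hn0.le (-1 + A * (1 - 2 * t)))
    rwa [one_div_one_div, mul_assoc, ← Real.rpow_add hn0, div_div_eq_mul_div, div_one,
      show 1 - A * (1 - 2 * t) + ε + (-1 + A * (1 - 2 * t)) = ε by ring] at this
  -- `p = 2` lies outside the density bound; there the trivial bound `# ≤ n` suffices
  · refine ⟨1, one_pos, fun m => ?_⟩
    have hn0 : 0 < n m := by linarith [hn m]
    have hcard' : (#{i | s m i ≤ 1 / 2} : ℝ) ≤ n m :=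
      le_trans (by exact_mod_cast card_filter_le _ _) (hcard m)
    calc (#{i | s m i ≤ 1 / 2} : ℝ) * n m ^ (-1 + A * (1 - 2 * (1 / 2)))
        ≤ n m * n m ^ (-1 : ℝ) := by
          norm_num only [mul_zero, add_zero]
          exact mul_le_mul_of_nonneg_right hcard' (by positivity)
      _ = 1 := by rw [Real.rpow_neg_one, mul_inv_cancel₀ hn0.ne']
      _ ≤ 1 * n m ^ ε := by rw [one_mul]; exact Real.one_le_rpow (hn m) hε.le

theorem DensityBound.sumBound (hA : 0 ≤ A) (hn : ∀ m, 1 ≤ n m)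
    (hcard : ∀ m, (Fintype.card (ι m) : ℝ) ≤ n m) (hs : ∀ m i, s m i ∈ Set.Icc 0 (1 / 2))
    (h : DensityBound A n s) : SumBound A n s := by
  intro ε hε
  obtain ⟨N, hN⟩ := exists_nat_gt (2 * A / ε)
  have hN0 : 0 < N := by exact_mod_cast (by positivity : 0 ≤ 2 * A / ε).trans_lt hN
  have hAN : A / N ≤ ε / 2 := by
    rw [div_lt_iff₀ hε] at hN
    rw [div_le_iff₀ (by exact_mod_cast hN0)]
    linarith
  choose C hC hbound using fun j : Fin N =>
    h.exists_card_mul_le hn hcard (level_mem_Ioc j) (half_pos hε)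
  have : Nonempty (Fin N) := ⟨⟨0, hN0⟩⟩
  refine ⟨∑ j, C j, sum_pos (fun j _ => hC j) univ_nonempty, fun m => ?_⟩
  have hn0 : 0 < n m := by linarith [hn m]
  calc ∑ i, n m ^ (-1 + A * (1 - 2 * s m i))
      ≤ n m ^ (A / N) * ∑ j, (#{i | s m i ≤ level N j} : ℝ) *
          n m ^ (-1 + A * (1 - 2 * level N j)) :=
        sum_rpow_le_rpow_mul_sum_card_mul (hn m) hA (hs m) hN0
    _ ≤ n m ^ (ε / 2) * ∑ j, C j * n m ^ (ε / 2) := by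
        refine mul_le_mul (Real.rpow_le_rpow_of_exponent_le (hn m) hAN)
          (sum_le_sum fun j _ => hbound j m) (sum_nonneg fun j _ => ?_) (by positivity)
        positivity
    _ = (∑ j, C j) * n m ^ ε := by
        rw [← sum_mul, mul_comm, mul_assoc, ← Real.rpow_add hn0, add_halves]

end

theorem stmt8_general (q : ℕ) (hq : 2 ≤ q) (A : ℝ) (hA0 : 0 < A)
    (V : ℕ → Type) [∀ m, Fintype (V m)] [∀ m, Nonempty (V m)]
    (G : ∀ m, SimpleGraph (V m))
    (hreg : ∀ m, (G m).IsRegularOfDegree (q + 1))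
    (lam : ∀ m, Fin (Fintype.card (V m)) → ℝ)
    (hev : ∀ m, ((G m).adjMatrix ℝ).charpoly =
      ∏ i, (Polynomial.X - Polynomial.C (((q : ℝ) + 1) * lam m i))) :
    (∀ p : ℝ, 2 < p → ∀ ε : ℝ, 0 < ε → ∃ C : ℝ, 0 < C ∧ ∀ m,
        ((Finset.univ.filter (fun i => pexp q (lam m i) ≤ 1 / p)).card : ℝ)
          ≤ C * (Fintype.card (V m) : ℝ) ^ (1 - A * (1 - 2 / p) + ε))
    ↔ (∀ ε : ℝ, 0 < ε → ∃ C : ℝ, 0 < C ∧ ∀ m,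
        ∑ i, (Fintype.card (V m) : ℝ) ^ (-1 + A * (1 - 2 * pexp q (lam m i)))
          ≤ C * (Fintype.card (V m) : ℝ) ^ ε) := by
  have hn : ∀ m, (1 : ℝ) ≤ Fintype.card (V m) := fun m => by exact_mod_cast Fintype.card_pos
  have hcard : ∀ m, (Fintype.card (Fin (Fintype.card (V m))) : ℝ) ≤ Fintype.card (V m) :=
    fun m => by rw [Fintype.card_fin]
  have hlam : ∀ m i, |lam m i| ≤ 1 := fun m =>
    (hreg m).abs_le_one_of_charpoly_eq_prod q.succ_pos (by exact_mod_cast hev m)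
  have hs : ∀ m i, pexp q (lam m i) ∈ Set.Icc 0 (1 / 2) := fun m i =>
    ⟨pexp_nonneg hq (hlam m i), pexp_le_half hq (lam m i)⟩
  exact ⟨DensityBound.sumBound hA0.le hn hcard hs, SumBound.densityBound hA0.le hn⟩

/-- For a family of `(q+1)`-regular graphs with eigenvalue lists `lam m`,
the Sarnak–Xue density condition `#{i : p_i ≥ p} ≪_ε n^{1-A(1-2/p)+ε}` (for all `p > 2`)
is equivalent to `∑_i n^{-1+A(1-2/p_i)} ≪_ε n^ε`. -/
theorem stmt8 (q : ℕ) (hq : 2 ≤ q) (A : ℝ) (hA0 : 0 < A) (hA1 : A ≤ 1)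
    (V : ℕ → Type) [∀ m, Fintype (V m)] [∀ m, Nonempty (V m)]
    (G : ∀ m, SimpleGraph (V m))
    (hreg : ∀ m, (G m).IsRegularOfDegree (q + 1))
    (lam : ∀ m, Fin (Fintype.card (V m)) → ℝ)
    (hev : ∀ m, ((G m).adjMatrix ℝ).charpoly =
      ∏ i, (Polynomial.X - Polynomial.C (((q : ℝ) + 1) * lam m i))) :
    (∀ p : ℝ, 2 < p → ∀ ε : ℝ, 0 < ε → ∃ C : ℝ, 0 < C ∧ ∀ m,
        ((Finset.univ.filter (fun i => pexp q (lam m i) ≤ 1 / p)).card : ℝ)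
          ≤ C * (Fintype.card (V m) : ℝ) ^ (1 - A * (1 - 2 / p) + ε))
    ↔ (∀ ε : ℝ, 0 < ε → ∃ C : ℝ, 0 < C ∧ ∀ m,
        ∑ i, (Fintype.card (V m) : ℝ) ^ (-1 + A * (1 - 2 * pexp q (lam m i)))
          ≤ C * (Fintype.card (V m) : ℝ) ^ ε) :=
  stmt8_general q hq A hA0 V G hreg lam hev
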